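/- arXiv:0810.1776 — 4 statements merged into one kernel-verified Lean document; each statement's English description precedes it below -/
import Mathlib

section
/- Let A be an invertible 4×4 real matrix (indices in {0,1,2,3}) and let u ∈ ℝ⁴ with u₀ ≠ 0. Define the 3×3 real matrix M (indices i,j ∈ {1,2,3}) by M_{ij} = (A⁻¹)_{ji} − (A⁻¹)_{0i}·u_j/u₀, where (A⁻¹)_{βα} denotes the entry of A⁻¹ in row β, column α. Then det A · det M = (A u)₀ / u₀, where (A u)₀ is the 0-th component of the matrix–vector product A u. -/
open Matrix

/-- Let `A` be an invertible 4×4 real matrix and `u ∈ ℝ⁴` with `u 0 ≠ 0`.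
Define the 3×3 matrix `M` by `M i j = (A⁻¹) j i − (A⁻¹) 0 i * u j / u 0` (indices `i, j`
ranging over `{1,2,3}`, embedded in `Fin 4` via `Fin.succ`).  Then
`det A * det M = (A *ᵥ u) 0 / u 0`. -/
theorem det_momentum_jacobian
    (A : Matrix (Fin 4) (Fin 4) ℝ) (hA : IsUnit A.det)
    (u : Fin 4 → ℝ) (hu : u 0 ≠ 0)
    (M : Matrix (Fin 3) (Fin 3) ℝ)
    (hM : ∀ i j : Fin 3, M i j = A⁻¹ j.succ i.succ - A⁻¹ 0 i.succ * u j.succ / u 0) :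
    A.det * M.det = (A *ᵥ u) 0 / u 0 := by
  set B := A⁻¹ with hB
  set B' := B.updateCol 0 u with hB'
  set F : Matrix (Fin 4) (Fin 4) ℝ :=
    !![u 0 / u 0, 0, 0, 0;
       u 1 / u 0, 1, 0, 0;
       u 2 / u 0, 0, 1, 0;
       u 3 / u 0, 0, 0, 1] with hF
  set E : Matrix (Fin 4) (Fin 4) ℝ :=
    !![u 0, B 0 1, B 0 2, B 0 3;
       0,   M 0 0, M 1 0, M 2 0;
       0,   M 0 1, M 1 1, M 2 1;
       0,   M 0 2, M 1 2, M 2 2] with hE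
  have hs0 : (0 : Fin 3).succ = (1 : Fin 4) := rfl
  have hs1 : (1 : Fin 3).succ = (2 : Fin 4) := rfl
  have hs2 : (2 : Fin 3).succ = (3 : Fin 4) := rfl
  -- B' = F * E
  have hfact : B' = F * E := by
    ext α β
    fin_cases α <;> fin_cases β <;>
      simp [hB', hF, hE, Matrix.mul_apply, Fin.sum_univ_four,
        Matrix.updateCol_apply, hM, hs0, hs1, hs2, Matrix.vecHead, Matrix.vecTail] <;>
      field_simp <;> ring
  -- det F = 1
  have hdetF : F.det = 1 := by
    simp [hF, Matrix.det_succ_row_zero, Fin.sum_univ_succ, div_self hu]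
  -- det E = u 0 * det M
  have hdetE : E.det = u 0 * M.det := by
    have h3 : M.det = M 0 0 * (M 1 1 * M 2 2 - M 2 1 * M 1 2)
        - M 1 0 * (M 0 1 * M 2 2 - M 2 1 * M 0 2)
        + M 2 0 * (M 0 1 * M 1 2 - M 1 1 * M 0 2) := by
      rw [Matrix.det_fin_three]; ring
    simp [hE, Matrix.det_succ_column_zero, Fin.sum_univ_succ, h3]
    exact Or.inl (by ring)
  -- det (A * B') = (A *ᵥ u) 0
  have hAB' : A * B' = (1 : Matrix (Fin 4) (Fin 4) ℝ).updateCol 0 (A *ᵥ u) := by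
    ext i j
    by_cases hj : j = 0
    · subst hj
      simp [hB', Matrix.mul_apply, Matrix.updateCol_apply, Matrix.mulVec, dotProduct]
    · have h : (A * B') i j = (A * B) i j := by
        simp [hB', Matrix.mul_apply, Matrix.updateCol_apply, hj]
      rw [h, Matrix.updateCol_apply, if_neg hj, hB, Matrix.mul_nonsing_inv A hA]
  have hdetAB' : A.det * B'.det = (A *ᵥ u) 0 := by
    rw [← Matrix.det_mul, hAB', ← Matrix.cramer_apply, Matrix.cramer_one]
    simp
  have hdetB' : B'.det = u 0 * M.det := by
    rw [hfact, Matrix.det_mul, hdetF, one_mul, hdetE]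
  rw [hdetB'] at hdetAB'
  field_simp
  linarith [hdetAB']
end

section
/- Let m > 0, let G : ℝ⁴ → M₄(ℝ) assign to each point a symmetric 4×4 real matrix, let x ∈ ℝ⁴ and q ∈ ℝ³. Let φ : ℝ⁴ → ℝ⁴ be C² on a neighborhood of x with Dφ(y) invertible for all y near x. Let P : ℝ⁴ × ℝ³ → ℝ⁴ be differentiable at (x,q) and satisfy, for all (y,r) in a neighborhood of (x,q): P(y,r)_i = r_i for i = 1,2,3, and ⟨P(y,r), G(y)·P(y,r)⟩ = −m². Set u = G(x)·P(x,q) ∈ ℝ⁴ and assume u₀ ≠ 0. Define Φ : ℝ⁴ × ℝ³ → ℝ⁴ × ℝ³ near (x,q) by Φ(y,r) = (φ(y), q̄(y,r)), where q̄(y,r)_i is the i-th component (i = 1,2,3) of ((Dφ(y))⁻¹)ᵀ · P(y,r). Then Φ is differentiable at (x,q) and the determinant of its derivative DΦ(x,q) (as a linear map ℝ⁷ → ℝ⁷) equals (Dφ(x)·u)₀ / u₀. -/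
open Matrix Filter Topology

/-!
In the coordinates `(y, r)` the map `Φ` is fibred over `φ`, so its Jacobian is block triangular
and `det DΦ = det Dφ · det ∂ᵣq̄`. On the mass shell `P(x, ·)` parametrises the level set of the
quadratic form `⟨p, G p⟩` over its spatial components; since `u = G P` is half the gradient of
the form, differentiating the constraint gives `∂ᵣP e = (-(u₁e₁ + u₂e₂ + u₃e₃)/u₀, e)`. The
fibre Jacobian is therefore the spatial block of `J⁻ᵀ` times this matrix, and a cofactor
computation identifies `det J` times its determinant with `(J u)₀ / u₀`.
-/

section MatrixCalculus

variable {𝕜 E ι : Type*} [NontriviallyNormedField 𝕜] [NormedAddCommGroup E] [NormedSpace 𝕜 E]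
  [Fintype ι] {M : E → Matrix ι ι 𝕜} {x : E}

theorem DifferentiableAt.matrix_mulVec {κ : Type*} {A : E → Matrix κ ι 𝕜}
    (hA : ∀ i j, DifferentiableAt 𝕜 (fun y => A y i j) x) {v : E → ι → 𝕜}
    (hv : DifferentiableAt 𝕜 v x) : DifferentiableAt 𝕜 (fun y => A y *ᵥ v y) x :=
  differentiableAt_pi.2 fun i =>
    DifferentiableAt.fun_sum fun j _ => (hA i j).mul (differentiableAt_pi.1 hv j)

variable [DecidableEq ι]

theorem DifferentiableAt.matrix_det (hM : ∀ i j, DifferentiableAt 𝕜 (fun y => M y i j) x) :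
    DifferentiableAt 𝕜 (fun y => (M y).det) x := by
  simp only [Matrix.det_apply']
  exact DifferentiableAt.fun_sum fun σ _ =>
    (HasFDerivAt.finsetProd fun i _ => (hM (σ i) i).hasFDerivAt).differentiableAt.const_mul _

theorem DifferentiableAt.matrix_adjugate (hM : ∀ i j, DifferentiableAt 𝕜 (fun y => M y i j) x)
    (i j : ι) : DifferentiableAt 𝕜 (fun y => (M y).adjugate i j) x := by
  simp only [Matrix.adjugate_apply]
  refine DifferentiableAt.matrix_det fun a b => ?_
  by_cases ha : a = j <;> simp [Matrix.updateRow_apply, ha, hM]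

theorem DifferentiableAt.matrix_inv (hM : ∀ i j, DifferentiableAt 𝕜 (fun y => M y i j) x)
    (hdet : (M x).det ≠ 0) (i j : ι) : DifferentiableAt 𝕜 (fun y => (M y)⁻¹ i j) x := by
  simp only [Matrix.inv_def, Ring.inverse_eq_inv', Matrix.smul_apply, smul_eq_mul]
  exact ((DifferentiableAt.matrix_det hM).inv hdet).mul (DifferentiableAt.matrix_adjugate hM i j)

theorem differentiableAt_toMatrix'_fderiv_apply {f : (ι → 𝕜) → ι → 𝕜} {x : ι → 𝕜}
    (hf : DifferentiableAt 𝕜 (fderiv 𝕜 f) x) (i j : ι) :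
    DifferentiableAt 𝕜 (fun y => LinearMap.toMatrix' (fderiv 𝕜 f y : (ι → 𝕜) →ₗ[𝕜] ι → 𝕜) i j)
      x := by
  simp only [LinearMap.toMatrix'_apply, ContinuousLinearMap.coe_coe]
  exact differentiableAt_pi.1 (hf.clm_apply (differentiableAt_const _)) i

end MatrixCalculus

theorem LinearMap.det_prod_comp_fst {R M M' : Type*} [CommRing R] [AddCommGroup M] [Module R M]
    [AddCommGroup M'] [Module R M'] [Module.Free R M] [Module.Finite R M] [Module.Free R M']
    [Module.Finite R M'] (f : Module.End R M) (g : M × M' →ₗ[R] M') :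
    ((f ∘ₗ LinearMap.fst R M M').prod g).det = f.det * (g ∘ₗ LinearMap.inr R M M').det := by
  classical
  let b := Module.Free.chooseBasis R M
  let b' := Module.Free.chooseBasis R M'
  have hmat : LinearMap.toMatrix (b.prod b') (b.prod b') ((f ∘ₗ LinearMap.fst R M M').prod g) =
      Matrix.fromBlocks (LinearMap.toMatrix b b f) 0
        (LinearMap.toMatrix b b' (g ∘ₗ LinearMap.inl R M M'))
        (LinearMap.toMatrix b' b' (g ∘ₗ LinearMap.inr R M M')) := by
    ext (i | i) (j | j) <;> simp [LinearMap.toMatrix]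
  rw [← LinearMap.det_toMatrix (b.prod b'), hmat, det_fromBlocks_zero₁₂, LinearMap.det_toMatrix,
    LinearMap.det_toMatrix]

theorem det_fderiv_prodMk_comp_fst {𝕜 E F : Type*} [NontriviallyNormedField 𝕜]
    [NormedAddCommGroup E] [NormedSpace 𝕜 E] [FiniteDimensional 𝕜 E]
    [NormedAddCommGroup F] [NormedSpace 𝕜 F] [FiniteDimensional 𝕜 F]
    {f : E → E} {g : E × F → F} {x : E} {y : F}
    (hf : DifferentiableAt 𝕜 f x) (hg : DifferentiableAt 𝕜 g (x, y)) :
    LinearMap.det (fderiv 𝕜 (fun z => (f z.1, g z)) (x, y) : E × F →ₗ[𝕜] E × F) =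
      LinearMap.det (fderiv 𝕜 f x : E →ₗ[𝕜] E) *
        LinearMap.det (fderiv 𝕜 (fun v => g (x, v)) y : F →ₗ[𝕜] F) := by
  have hfibre : fderiv 𝕜 (fun v => g (x, v)) y = (fderiv 𝕜 g (x, y)).comp (.inr 𝕜 E F) :=
    (hg.hasFDerivAt.comp y (hasFDerivAt_prodMk_right x y)).fderiv
  have hD : HasFDerivAt (fun z : E × F => (f z.1, g z))
      (((fderiv 𝕜 f x).comp (.fst 𝕜 E F)).prod (fderiv 𝕜 g (x, y))) (x, y) :=
    (hf.hasFDerivAt.comp (x, y) hasFDerivAt_fst).prodMk hg.hasFDerivAt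
  rw [hD.fderiv, hfibre]
  exact LinearMap.det_prod_comp_fst _ _

theorem HasFDerivAt.dotProduct {ι E : Type*} [Fintype ι] [NormedAddCommGroup E] [NormedSpace ℝ E]
    {f g : E → ι → ℝ} {f' g' : E →L[ℝ] ι → ℝ} {x : E}
    (hf : HasFDerivAt f f' x) (hg : HasFDerivAt g g' x) :
    HasFDerivAt (fun y => f y ⬝ᵥ g y)
      (∑ i, (f x i • (ContinuousLinearMap.proj i).comp g' +
        g x i • (ContinuousLinearMap.proj i).comp f')) x :=
  HasFDerivAt.fun_sum fun i _ => (hasFDerivAt_pi'.1 hf i).mul (hasFDerivAt_pi'.1 hg i)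

theorem mulVec_dotProduct_fderiv_eq_zero {ι E : Type*} [Fintype ι] [NormedAddCommGroup E]
    [NormedSpace ℝ E] {G : Matrix ι ι ℝ} (hG : G.IsSymm) {f : E → ι → ℝ} {f' : E →L[ℝ] ι → ℝ}
    {x : E} (hf : HasFDerivAt f f' x) {c : ℝ} (hc : ∀ᶠ y in 𝓝 x, f y ⬝ᵥ (G *ᵥ f y) = c) (e : E) :
    (G *ᵥ f x) ⬝ᵥ f' e = 0 := by
  have hq := hf.dotProduct ((G.mulVecLin.toContinuousLinearMap).hasFDerivAt.comp x hf)
  have hzero := hq.unique ((hasFDerivAt_const c x).congr_of_eventuallyEq hc)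
  have hsum : f x ⬝ᵥ (G *ᵥ f' e) + (G *ᵥ f x) ⬝ᵥ f' e = 0 := by
    simpa [Finset.sum_add_distrib, dotProduct] using congrArg (· e) hzero
  rw [dotProduct_mulVec, ← mulVec_transpose, hG.eq] at hsum
  linarith

section HyperplaneGraph

variable {K : Type*} [Field K] {n : ℕ}

/-- The matrix of `e ↦ (-(u₁e₁ + ⋯ + uₙeₙ) / u₀, e)`, whose columns span the hyperplane
`u ⬝ᵥ v = 0` when `u₀ ≠ 0`. -/
def hyperplaneGraph (u : Fin (n + 1) → K) : Matrix (Fin (n + 1)) (Fin n) K :=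
  Matrix.of (vecCons (fun j => -u j.succ / u 0) (1 : Matrix (Fin n) (Fin n) K))

@[simp] lemma hyperplaneGraph_zero (u : Fin (n + 1) → K) (j : Fin n) :
    hyperplaneGraph u 0 j = -u j.succ / u 0 := rfl

@[simp] lemma hyperplaneGraph_succ (u : Fin (n + 1) → K) (i j : Fin n) :
    hyperplaneGraph u i.succ j = (1 : Matrix (Fin n) (Fin n) K) i j := rfl

lemma vecMul_hyperplaneGraph {u : Fin (n + 1) → K} (hu0 : u 0 ≠ 0) :
    u ᵥ* hyperplaneGraph u = 0 := by
  ext j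
  simp only [vecMul, dotProduct, Fin.sum_univ_succ, hyperplaneGraph_zero, hyperplaneGraph_succ,
    one_apply, mul_ite, mul_one, mul_zero, Finset.sum_ite_eq', Finset.mem_univ, if_true,
    Pi.zero_apply]
  field_simp
  ring

theorem det_mul_det_transpose_inv_mul_hyperplaneGraph {J : Matrix (Fin (n + 1)) (Fin (n + 1)) K}
    (hJ : IsUnit J.det) {u : Fin (n + 1) → K} (hu0 : u 0 ≠ 0) :
    J.det * ((J⁻¹ᵀ.submatrix Fin.succ id) * hyperplaneGraph u).det = (J *ᵥ u) 0 / u 0 := by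
  -- `W = [e₀ | hyperplaneGraph u]` is unitriangular and `(u / u₀)ᵀ W = e₀ᵀ`, so the minor on the
  -- left is the `(0, 0)` cofactor of `J⁻ᵀ W`, computed from its inverse `W⁻¹ Jᵀ`.
  set W : Matrix (Fin (n + 1)) (Fin (n + 1)) K :=
    of fun i => Fin.cons ((Pi.single 0 1 : Fin (n + 1) → K) i) (hyperplaneGraph u i) with hW
  have hWdet : W.det = 1 := by
    have hsub : W.submatrix Fin.succ Fin.succ = 1 := by ext i j; simp [hW]
    rw [det_succ_column_zero, Fin.sum_univ_succ, Fin.succAbove_zero, hsub]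
    simp [hW]
  have hrow : ((u 0)⁻¹ • u) ᵥ* W = Pi.single 0 1 := by
    ext k
    refine Fin.cases ?_ (fun j => ?_) k
    · simp only [vecMul, dotProduct, Pi.smul_apply, smul_eq_mul, hW, Pi.single_apply, of_apply,
        Fin.cons_zero, mul_ite, mul_one, mul_zero, Finset.sum_ite_eq', Finset.mem_univ, if_true]
      field_simp
    · have := congrFun (vecMul_hyperplaneGraph hu0) j
      simp only [vecMul, dotProduct] at this
      simp [hW, vecMul, dotProduct, mul_assoc, ← Finset.mul_sum, this]
  set M := J⁻¹ᵀ * W with hM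
  have hMdet : M.det = J.det⁻¹ := by
    rw [hM, det_mul, hWdet, mul_one, det_transpose, det_nonsing_inv, Ring.inverse_eq_inv']
  have hminor : J⁻¹ᵀ.submatrix Fin.succ id * hyperplaneGraph u = M.submatrix Fin.succ Fin.succ := by
    rw [hM, submatrix_mul _ _ _ id _ Function.bijective_id]
    congr 1
  have hMinv : M⁻¹ 0 0 = (J *ᵥ u) 0 / u 0 := by
    have hWinv : W * W⁻¹ = 1 := mul_nonsing_inv W (by simp [hWdet])
    have hWMinv : W * M⁻¹ = Jᵀ := by
      rw [hM, Matrix.mul_inv_rev, transpose_nonsing_inv,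
        nonsing_inv_nonsing_inv _ (by simpa using hJ), ← Matrix.mul_assoc, hWinv, Matrix.one_mul]
    calc M⁻¹ 0 0 = (Pi.single 0 1 ᵥ* M⁻¹) 0 := by simp
      _ = (((u 0)⁻¹ • u) ᵥ* (W * M⁻¹)) 0 := by rw [← hrow, vecMul_vecMul]
      _ = (J *ᵥ u) 0 / u 0 := by
        rw [hWMinv, vecMul_transpose, mulVec_smul, Pi.smul_apply, smul_eq_mul, inv_mul_eq_div]
  have hJdet : J.det ≠ 0 := hJ.ne_zero
  calc J.det * ((J⁻¹ᵀ.submatrix Fin.succ id) * hyperplaneGraph u).det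
      = J.det * M.adjugate 0 0 := by
        rw [hminor, adjugate_fin_succ_eq_det_submatrix]; simp
    _ = J.det * (M.det * M⁻¹ 0 0) := by
        rw [inv_def, Ring.inverse_eq_inv', Matrix.smul_apply, smul_eq_mul, hMdet]
        field_simp
    _ = (J *ᵥ u) 0 / u 0 := by
        rw [hMdet, hMinv]; field_simp

theorem toMatrix'_eq_hyperplaneGraph {L : (Fin n → K) →ₗ[K] Fin (n + 1) → K}
    {u : Fin (n + 1) → K} (hu0 : u 0 ≠ 0) (hsucc : ∀ e i, L e i.succ = e i)
    (horth : ∀ e, u ⬝ᵥ L e = 0) : LinearMap.toMatrix' L = hyperplaneGraph u := by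
  ext i j
  refine Fin.cases ?_ (fun i => ?_) i
  · have h := horth (Pi.single j 1)
    simp only [dotProduct, Fin.sum_univ_succ, hsucc, Pi.single_apply, mul_ite, mul_one,
      mul_zero, Finset.sum_ite_eq', Finset.mem_univ, if_true] at h
    rw [LinearMap.toMatrix'_apply, hyperplaneGraph_zero]
    field_simp
    linear_combination h
  · simp [LinearMap.toMatrix'_apply, hsucc, one_apply, Pi.single_apply, eq_comm]

theorem toMatrix'_fderiv_massShell_eq_hyperplaneGraph {G : Matrix (Fin (n + 1)) (Fin (n + 1)) ℝ}
    (hG : G.IsSymm) {p : (Fin n → ℝ) → Fin (n + 1) → ℝ} {p' : (Fin n → ℝ) →L[ℝ] Fin (n + 1) → ℝ}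
    {q : Fin n → ℝ} (hp : HasFDerivAt p p' q) {c : ℝ}
    (hshell : ∀ᶠ r in 𝓝 q, (∀ i : Fin n, p r i.succ = r i) ∧ p r ⬝ᵥ (G *ᵥ p r) = c)
    (hu0 : (G *ᵥ p q) 0 ≠ 0) :
    LinearMap.toMatrix' (p' : (Fin n → ℝ) →ₗ[ℝ] Fin (n + 1) → ℝ) = hyperplaneGraph (G *ᵥ p q) := by
  refine toMatrix'_eq_hyperplaneGraph hu0 (fun e i => ?_) fun e =>
    mulVec_dotProduct_fderiv_eq_zero hG hp (hshell.mono fun _ h => h.2) e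
  have h := (hasFDerivAt_pi'.1 hp i.succ).unique
    ((hasFDerivAt_apply i q).congr_of_eventuallyEq (hshell.mono fun _ h => h.1 i))
  exact congrArg (· e) h

theorem det_mul_det_fderiv_transpose_inv_mulVec_massShell
    {J : Matrix (Fin (n + 1)) (Fin (n + 1)) ℝ} (hJ : IsUnit J.det)
    {G : Matrix (Fin (n + 1)) (Fin (n + 1)) ℝ} (hG : G.IsSymm)
    {p : (Fin n → ℝ) → Fin (n + 1) → ℝ} {p' : (Fin n → ℝ) →L[ℝ] Fin (n + 1) → ℝ}
    {q : Fin n → ℝ} (hp : HasFDerivAt p p' q) {c : ℝ}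
    (hshell : ∀ᶠ r in 𝓝 q, (∀ i : Fin n, p r i.succ = r i) ∧ p r ⬝ᵥ (G *ᵥ p r) = c)
    (hu0 : (G *ᵥ p q) 0 ≠ 0) :
    J.det * LinearMap.det (fderiv ℝ (fun r (i : Fin n) => (J⁻¹ᵀ *ᵥ p r) i.succ) q :
        (Fin n → ℝ) →ₗ[ℝ] Fin n → ℝ) =
      (J *ᵥ (G *ᵥ p q)) 0 / (G *ᵥ p q) 0 := by
  set A := J⁻¹ᵀ.submatrix Fin.succ id
  have hfibre : fderiv ℝ (fun r (i : Fin n) => (J⁻¹ᵀ *ᵥ p r) i.succ) q =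
      (toLin' A).toContinuousLinearMap.comp p' :=
    ((toLin' A).toContinuousLinearMap.hasFDerivAt.comp q hp).fderiv
  rw [hfibre, ← LinearMap.det_toMatrix', ContinuousLinearMap.toLinearMap_comp,
    LinearMap.coe_toContinuousLinearMap, LinearMap.toMatrix'_comp, LinearMap.toMatrix'_toLin',
    toMatrix'_fderiv_massShell_eq_hyperplaneGraph hG hp hshell hu0]
  exact det_mul_det_transpose_inv_mul_hyperplaneGraph hJ hu0

end HyperplaneGraph

theorem massShell_coordinateChange_jacobian_det_general
    (m : ℝ)
    (G : (Fin 4 → ℝ) → Matrix (Fin 4) (Fin 4) ℝ) (hG : ∀ y, (G y).IsSymm)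
    (x : Fin 4 → ℝ) (q : Fin 3 → ℝ)
    (φ : (Fin 4 → ℝ) → (Fin 4 → ℝ))
    (hφ : ∀ᶠ y in 𝓝 x, ContDiffAt ℝ 2 φ y)
    (J : (Fin 4 → ℝ) → Matrix (Fin 4) (Fin 4) ℝ)
    (hJ : ∀ y, J y = LinearMap.toMatrix'
      ((fderiv ℝ φ y : (Fin 4 → ℝ) →L[ℝ] (Fin 4 → ℝ)) : (Fin 4 → ℝ) →ₗ[ℝ] (Fin 4 → ℝ)))
    (hJinv : ∀ᶠ y in 𝓝 x, IsUnit (J y).det)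
    (P : (Fin 4 → ℝ) × (Fin 3 → ℝ) → (Fin 4 → ℝ))
    (hP : DifferentiableAt ℝ P (x, q))
    (hshell : ∀ᶠ z in 𝓝 (x, q),
      (∀ i : Fin 3, P z i.succ = z.2 i) ∧ P z ⬝ᵥ (G z.1 *ᵥ P z) = -(m ^ 2))
    (u : Fin 4 → ℝ) (hu : u = G x *ᵥ P (x, q)) (hu0 : u 0 ≠ 0)
    (Φ : (Fin 4 → ℝ) × (Fin 3 → ℝ) → (Fin 4 → ℝ) × (Fin 3 → ℝ))
    (hΦ : ∀ z, Φ z = (φ z.1, fun i : Fin 3 => (((J z.1)⁻¹)ᵀ *ᵥ P z) i.succ)) :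
    DifferentiableAt ℝ Φ (x, q) ∧
      LinearMap.det
        ((fderiv ℝ Φ (x, q) : ((Fin 4 → ℝ) × (Fin 3 → ℝ)) →L[ℝ] ((Fin 4 → ℝ) × (Fin 3 → ℝ))) :
          ((Fin 4 → ℝ) × (Fin 3 → ℝ)) →ₗ[ℝ] ((Fin 4 → ℝ) × (Fin 3 → ℝ))) =
        (fderiv ℝ φ x u) 0 / u 0 := by
  have hφx : DifferentiableAt ℝ φ x := hφ.self_of_nhds.differentiableAt two_ne_zero
  have hJx : IsUnit (J x).det := hJinv.self_of_nhds
  have hJd (i j : Fin 4) :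
      DifferentiableAt ℝ (fun z : (Fin 4 → ℝ) × (Fin 3 → ℝ) => J z.1 i j) (x, q) := by
    simp only [hJ]
    exact DifferentiableAt.comp (f := Prod.fst) (x, q) (differentiableAt_toMatrix'_fderiv_apply
      ((hφ.self_of_nhds.fderiv_right le_rfl).differentiableAt one_ne_zero) i j)
      differentiableAt_fst
  have hΦ₂d : DifferentiableAt ℝ
      (fun z : (Fin 4 → ℝ) × (Fin 3 → ℝ) => fun i : Fin 3 => ((J z.1)⁻¹ᵀ *ᵥ P z) i.succ) (x, q) :=
    differentiableAt_pi.2 fun i => differentiableAt_pi.1 (DifferentiableAt.matrix_mulVec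
      (fun i j => DifferentiableAt.matrix_inv hJd hJx.ne_zero j i) hP) i.succ
  obtain rfl : Φ = _ := funext hΦ
  refine ⟨(hφx.comp (x, q) differentiableAt_fst).prodMk hΦ₂d, ?_⟩
  rw [det_fderiv_prodMk_comp_fst hφx hΦ₂d]
  have hJu : fderiv ℝ φ x u = J x *ᵥ u := by rw [hJ x, LinearMap.toMatrix'_mulVec]; rfl
  rw [hJu, ← LinearMap.det_toMatrix', ← hJ x]
  subst hu
  exact det_mul_det_fderiv_transpose_inv_mulVec_massShell hJx (hG x)
    (hP.hasFDerivAt.comp q (hasFDerivAt_prodMk_right x q))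
    ((Continuous.prodMk_right x).continuousAt.eventually hshell) hu0

/-- **Proposition 1 in coordinates.** Let `G y` be the (symmetric)
inverse metric at `y`, `P (y, r)` the covariant four-momentum with spatial
components `r` lying on the mass shell `⟨P, G·P⟩ = −m²`, `u = G x ·ᵥ P (x, q)` the
contravariant momentum with `u 0 ≠ 0`, and `φ` a C² coordinate change with
invertible Jacobian `J y` near `x`.  Then the induced transformation
`Φ (y, r) = (φ y, ((J y)⁻¹ᵀ ·ᵥ P (y, r))_{i=1,2,3})` of the mass-shell coordinates
is differentiable at `(x, q)` and `det DΦ(x, q) = (Dφ(x) u)₀ / u₀`. -/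
theorem massShell_coordinateChange_jacobian_det
    (m : ℝ) (hm : 0 < m)
    (G : (Fin 4 → ℝ) → Matrix (Fin 4) (Fin 4) ℝ) (hG : ∀ y, (G y).IsSymm)
    (x : Fin 4 → ℝ) (q : Fin 3 → ℝ)
    (φ : (Fin 4 → ℝ) → (Fin 4 → ℝ))
    (hφ : ∀ᶠ y in 𝓝 x, ContDiffAt ℝ 2 φ y)
    (J : (Fin 4 → ℝ) → Matrix (Fin 4) (Fin 4) ℝ)
    (hJ : ∀ y, J y = LinearMap.toMatrix'
      ((fderiv ℝ φ y : (Fin 4 → ℝ) →L[ℝ] (Fin 4 → ℝ)) : (Fin 4 → ℝ) →ₗ[ℝ] (Fin 4 → ℝ)))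
    (hJinv : ∀ᶠ y in 𝓝 x, IsUnit (J y).det)
    (P : (Fin 4 → ℝ) × (Fin 3 → ℝ) → (Fin 4 → ℝ))
    (hP : DifferentiableAt ℝ P (x, q))
    (hshell : ∀ᶠ z in 𝓝 (x, q),
      (∀ i : Fin 3, P z i.succ = z.2 i) ∧ P z ⬝ᵥ (G z.1 *ᵥ P z) = -(m ^ 2))
    (u : Fin 4 → ℝ) (hu : u = G x *ᵥ P (x, q)) (hu0 : u 0 ≠ 0)
    (Φ : (Fin 4 → ℝ) × (Fin 3 → ℝ) → (Fin 4 → ℝ) × (Fin 3 → ℝ))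
    (hΦ : ∀ z, Φ z = (φ z.1, fun i : Fin 3 => (((J z.1)⁻¹)ᵀ *ᵥ P z) i.succ)) :
    DifferentiableAt ℝ Φ (x, q) ∧
      LinearMap.det
        ((fderiv ℝ Φ (x, q) : ((Fin 4 → ℝ) × (Fin 3 → ℝ)) →L[ℝ] ((Fin 4 → ℝ) × (Fin 3 → ℝ))) :
          ((Fin 4 → ℝ) × (Fin 3 → ℝ)) →ₗ[ℝ] ((Fin 4 → ℝ) × (Fin 3 → ℝ))) =
        (fderiv ℝ φ x u) 0 / u 0 :=
  massShell_coordinateChange_jacobian_det_general m G hG x q φ hφ J hJ hJinv P hP hshell u hu hu0 Φ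
    hΦ
end

section
/- Fix reals G, M, r₀, r > 0 and a, θ ∈ ℝ. For λ ∈ ℝ define ρ²(λ) = r² + λ²a²cos²θ, Δ(λ) = r² − 2GMλ²r + λ²a², Σ(λ) = (r² + λ²a²)² − λ²a²Δ(λ)sin²θ, D²(λ) = r₀³ + 2λ²a√(GM)·r₀^{3/2} − 3GMλ²r₀², and, for λ in the open interval around 0 on which D²(λ) > 0, A(λ) = (1 − 2GMλ²r/ρ²(λ))·(λ²a√(GM) + r₀^{3/2})²/D²(λ) + 4GMλ⁴ a r sin²θ·(λ²a√(GM) + r₀^{3/2})·√(GM)/(ρ²(λ)·D²(λ)) − GMλ²·Σ(λ)·sin²θ/(ρ²(λ)·D²(λ)), and α(λ) = √(A(λ)). Then: (i) α(0) = 1; (ii) α'(0) = 0; (iii) α''(0) = 3GM/r₀ − 2GM/r − GM r² sin²θ / r₀³; and (iv) if r = r₀ and θ = π/2, then α(λ) = 1 for every λ with D²(λ) > 0. -/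
/-!
Clearing denominators, `A(λ) = N(λ²) / D(λ²)` for polynomials `N`, `D` with `D(λ²) = ρ²(λ) D²(λ)`
and `N(0) = D(0) = r² r₀³`. Hence `α = h ∘ (·²)` with `h = √(N / D)` smooth near `0` and
`h(0) = 1`, so `α(0) = 1`, `α'(0) = 0` and `α''(0) = 2 h'(0) = (N'(0) - D'(0)) / D(0)`, which
is the Newtonian expression. On the orbit itself `N = D` identically.
-/

open Real Polynomial Filter Topology

theorem hasDerivAt_id_mul_of_continuousAt {φ : ℝ → ℝ} (hφ : ContinuousAt φ 0) :
    HasDerivAt (fun x => x * φ x) (φ 0) 0 := by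
  rw [hasDerivAt_iff_tendsto_slope]
  refine (hφ.tendsto.mono_left nhdsWithin_le_nhds).congr' ?_
  filter_upwards [self_mem_nhdsWithin] with x hx
  simp [slope_def_field, mul_div_cancel_left₀ _ (show x ≠ 0 from hx)]

theorem deriv_comp_sq_zero {h : ℝ → ℝ} (hh : ContDiffAt ℝ 1 h 0) :
    deriv (fun l => h (l ^ 2)) 0 = 0 ∧ deriv (deriv fun l => h (l ^ 2)) 0 = 2 * deriv h 0 := by
  have hsq : Tendsto (fun l : ℝ => l ^ 2) (𝓝 0) (𝓝 0) := by
    simpa using (continuous_pow 2).tendsto (0 : ℝ)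
  have hderiv : deriv (fun l => h (l ^ 2)) =ᶠ[𝓝 0] fun l => l * (2 * deriv h (l ^ 2)) := by
    filter_upwards [hsq.eventually (hh.eventually (by simp))] with l hl
    have hl' : HasDerivAt h (deriv h (l ^ 2)) (l ^ 2) :=
      (hl.differentiableAt one_ne_zero).hasDerivAt
    exact (hl'.comp l (h := fun x : ℝ => x ^ 2) (hasDerivAt_pow 2 l)).deriv.trans (by ring)
  have hcont : ContinuousAt (fun l : ℝ => 2 * deriv h (l ^ 2)) 0 := by
    have : ContinuousAt (deriv h) ((0 : ℝ) ^ 2) := by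
      simpa using (hh.derivWithin (m := 0) (by simp)).continuousAt
    exact continuousAt_const.mul (this.comp (f := fun l : ℝ => l ^ 2) (by fun_prop))
  refine ⟨by simp [hderiv.eq_of_nhds], ?_⟩
  rw [hderiv.deriv_eq, (hasDerivAt_id_mul_of_continuousAt hcont).deriv]
  simp

theorem sqrt_eval_div_eval_comp_sq (N D : ℝ[X]) (hND : N.eval 0 = D.eval 0)
    (hD : D.eval 0 ≠ 0) :
    let α := fun l : ℝ => √(N.eval (l ^ 2) / D.eval (l ^ 2))
    α 0 = 1 ∧ deriv α 0 = 0 ∧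
      deriv (deriv α) 0 = ((derivative N).eval 0 - (derivative D).eval 0) / D.eval 0 := by
  intro α
  have h1 : N.eval 0 / D.eval 0 = 1 := by rw [hND, div_self hD]
  have hsmooth : ContDiffAt ℝ 1 (fun x => √(N.eval x / D.eval x)) 0 :=
    ((N.contDiff_aeval 1).contDiffAt.div (D.contDiff_aeval 1).contDiffAt hD).sqrt
      (by simp [h1])
  have hderiv : HasDerivAt (fun x => √(N.eval x / D.eval x))
      (((derivative N).eval 0 - (derivative D).eval 0) / (2 * D.eval 0)) 0 := by
    refine (((N.hasDerivAt 0).div (D.hasDerivAt 0) hD).sqrt (by simp [h1])).congr_deriv ?_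
    simp only [Pi.div_apply, h1, sqrt_one]
    rw [hND]
    field_simp
  obtain ⟨hα', hα''⟩ := deriv_comp_sq_zero hsmooth
  refine ⟨by simp [α, h1], hα', ?_⟩
  rw [hα'', hderiv.deriv]
  field_simp

/-- `ρ² · D² · A` as a polynomial in `x = λ²`, with `k = √(GM)` and `p = r₀^{3/2}`. -/
noncomputable def kerrNum (G M r a θ k p : ℝ) : ℝ[X] :=
  (C (r ^ 2) + C (a ^ 2 * cos θ ^ 2 - 2 * G * M * r) * X) * (C (a * k) * X + C p) ^ 2
    + C (4 * G * M * a * r * sin θ ^ 2 * k) * X ^ 2 * (C (a * k) * X + C p)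
    - C (G * M * sin θ ^ 2) * X *
      ((C (r ^ 2) + C (a ^ 2) * X) ^ 2
        - C (a ^ 2 * sin θ ^ 2) * X * (C (r ^ 2) + C (a ^ 2 - 2 * G * M * r) * X))

noncomputable def kerrDen (G M r₀ r a θ k p : ℝ) : ℝ[X] :=
  (C (r ^ 2) + C (a ^ 2 * cos θ ^ 2) * X) *
    (C (r₀ ^ 3) + C (2 * a * k * p - 3 * G * M * r₀ ^ 2) * X)

section
variable (G M r₀ r a θ k p : ℝ)

theorem kerrNum_eval_zero_eq_kerrDen (hp : p ^ 2 = r₀ ^ 3) :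
    (kerrNum G M r a θ k p).eval 0 = (kerrDen G M r₀ r a θ k p).eval 0 := by
  simp [kerrNum, kerrDen, hp]

theorem kerr_derivative_sub_div (hp : p ^ 2 = r₀ ^ 3) (hr₀ : r₀ ≠ 0) (hr : r ≠ 0) :
    ((derivative (kerrNum G M r a θ k p)).eval 0 -
        (derivative (kerrDen G M r₀ r a θ k p)).eval 0) /
        (kerrDen G M r₀ r a θ k p).eval 0 =
      3 * G * M / r₀ - 2 * G * M / r - G * M * r ^ 2 * sin θ ^ 2 / r₀ ^ 3 := by
  simp only [kerrNum, kerrDen, derivative_add, derivative_sub, derivative_mul, derivative_sq,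
    derivative_C, derivative_X, eval_zero, eval_one, eval_add, eval_sub, eval_mul, eval_pow, eval_C,
    eval_X]
  field_simp
  linear_combination r * r₀ ^ 3 * (a ^ 2 * cos θ ^ 2 - 2 * G * M * r) * hp

theorem kerrNum_eq_kerrDen_of_equatorial (hk : k ^ 2 = G * M) (hp : p ^ 2 = r₀ ^ 3) (x : ℝ) :
    (kerrNum G M r₀ a (π / 2) k p).eval x = (kerrDen G M r₀ r₀ a (π / 2) k p).eval x := by
  simp only [kerrNum, kerrDen, cos_pi_div_two, sin_pi_div_two, eval_add, eval_sub, eval_mul,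
    eval_pow, eval_C, eval_X]
  linear_combination (r₀ ^ 2 * a ^ 2 * x ^ 2 + 2 * G * M * r₀ * a ^ 2 * x ^ 3) * hk
    + (r₀ ^ 2 - 2 * G * M * r₀ * x) * hp

end

/-- For the timelike Killing field tangent to a circular geodesic
orbit of Boyer–Lindquist radius `r₀` in the equatorial plane of Kerr spacetime,
the normalized norm `α(λ) = λ‖K‖` evaluated at Boyer–Lindquist coordinates `(r, θ)`
satisfies `α(0) = 1`, `α'(0) = 0`,
`α''(0) = 3GM/r₀ − 2GM/r − GM r² sin²θ/r₀³`, and `α ≡ 1` on the orbit itself. -/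
theorem kerr_circular_orbit_killing_norm
    (G M r₀ r : ℝ) (hG : 0 < G) (hM : 0 < M) (hr₀ : 0 < r₀) (hr : 0 < r)
    (a θ : ℝ)
    (ρsq Δ Sig Dsq A α : ℝ → ℝ)
    (hρ : ∀ l, ρsq l = r ^ 2 + l ^ 2 * a ^ 2 * Real.cos θ ^ 2)
    (hΔ : ∀ l, Δ l = r ^ 2 - 2 * G * M * l ^ 2 * r + l ^ 2 * a ^ 2)
    (hSig : ∀ l, Sig l = (r ^ 2 + l ^ 2 * a ^ 2) ^ 2 - l ^ 2 * a ^ 2 * Δ l * Real.sin θ ^ 2)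
    (hD : ∀ l, Dsq l = r₀ ^ 3 + 2 * l ^ 2 * a * Real.sqrt (G * M) * (r₀ * Real.sqrt r₀)
        - 3 * G * M * l ^ 2 * r₀ ^ 2)
    (hA : ∀ l, A l =
        (1 - 2 * G * M * l ^ 2 * r / ρsq l) *
          (l ^ 2 * a * Real.sqrt (G * M) + r₀ * Real.sqrt r₀) ^ 2 / Dsq l
        + 4 * G * M * l ^ 4 * a * r * Real.sin θ ^ 2 *
          (l ^ 2 * a * Real.sqrt (G * M) + r₀ * Real.sqrt r₀) * Real.sqrt (G * M) /
          (ρsq l * Dsq l)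
        - G * M * l ^ 2 * Sig l * Real.sin θ ^ 2 / (ρsq l * Dsq l))
    (hα : ∀ l, α l = Real.sqrt (A l)) :
    α 0 = 1 ∧
    deriv α 0 = 0 ∧
    deriv (deriv α) 0 =
      3 * G * M / r₀ - 2 * G * M / r - G * M * r ^ 2 * Real.sin θ ^ 2 / r₀ ^ 3 ∧
    (r = r₀ → θ = π / 2 → ∀ l, 0 < Dsq l → α l = 1) := by
  set k := √(G * M)
  set p := r₀ * √r₀
  have hk : k ^ 2 = G * M := sq_sqrt (mul_pos hG hM).le
  have hp : p ^ 2 = r₀ ^ 3 := by rw [mul_pow, sq_sqrt hr₀.le]; ring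
  set N := kerrNum G M r a θ k p
  set D := kerrDen G M r₀ r a θ k p
  have hρpos : ∀ l, 0 < ρsq l := fun l => by rw [hρ]; positivity
  have hDen : ∀ l, D.eval (l ^ 2) = ρsq l * Dsq l := fun l => by
    simp only [D, kerrDen, hρ, hD, eval_add, eval_mul, eval_C, eval_X]; ring
  have hAeq : ∀ l, A l = N.eval (l ^ 2) / D.eval (l ^ 2) := by
    intro l
    rw [hDen]
    rcases eq_or_ne (Dsq l) 0 with h0 | h0
    · -- both sides are junk `_ / 0 = 0`
      simp [hA, h0]
    have hρl := (hρpos l).ne'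
    rw [hA, hSig, hΔ]
    field_simp
    simp only [N, kerrNum, hρ, eval_add, eval_sub, eval_mul, eval_pow, eval_C, eval_X]
    ring
  have hαeq : α = fun l => √(N.eval (l ^ 2) / D.eval (l ^ 2)) :=
    funext fun l => by rw [hα, hAeq]
  have hD0 : D.eval 0 ≠ 0 := by simpa [D, kerrDen] using ⟨hr.ne', hr₀.ne'⟩
  obtain ⟨hα0, hα', hα''⟩ :=
    sqrt_eval_div_eval_comp_sq N D (kerrNum_eval_zero_eq_kerrDen G M r₀ r a θ k p hp) hD0
  refine ⟨hαeq ▸ hα0, hαeq ▸ hα',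
    hαeq ▸ hα''.trans (kerr_derivative_sub_div G M r₀ r a θ k p hp hr₀.ne' hr.ne'), ?_⟩
  rintro rfl rfl l hl
  have hDl : D.eval (l ^ 2) ≠ 0 := by rw [hDen]; exact (mul_pos (hρpos l) hl).ne'
  rw [hα, hAeq, kerrNum_eq_kerrDen_of_equatorial G M r a k p hk hp, div_self hDl, sqrt_one]
end

section
/- Fix reals G, M, r₀, r > 0 and a, θ ∈ ℝ. For λ ∈ ℝ define ρ²(λ) = r² + λ²a²cos²θ, Δ(λ) = r² − 2GMλ²r + λ²a², Σ(λ) = (r² + λ²a²)² − λ²a²Δ(λ)sin²θ, Δ₀(λ) = r₀² − 2GMλ²r₀ + λ²a², Σ₀(λ) = (r₀² + λ²a²)² − λ²a²Δ₀(λ), and, for λ in the open interval around 0 on which Δ₀(λ) > 0 and Σ₀(λ) > 0, α(λ) = √( [ (ρ²(λ) − 2GMλ²r)·Σ₀(λ)² − 4G²M²a²λ⁶·r₀·(r₀Σ(λ) − 2rΣ₀(λ))·sin²θ ] / ( r₀²·ρ²(λ)·Δ₀(λ)·Σ₀(λ) ) ). Then: (i) α(0) = 1; (ii) α'(0) = 0;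 (iii) α''(0) = 2GM/r₀ − 2GM/r; and (iv) if r = r₀ and θ = π/2, then α(λ) = 1 for every λ with Δ₀(λ) > 0 and Σ₀(λ) > 0. -/
/-!
Write `u = λ²`. The radicand defining `α` is a rational function `R(u)` of `u` alone, so
`α(λ) = √(R(λ²))` is even. Both numerator and denominator of `R` equal `r₀⁸r²` at `u = 0`,
hence `R(0) = 1`, and comparing their `u`-derivatives gives `R'(0) = 2GM/r₀ − 2GM/r`. For any
`C¹` function `φ`, `λ ↦ φ(λ²)` has vanishing first derivative at `0` and second derivative
`2φ'(0)` there; with `φ = √R` this gives (i)–(iii). At the observer's own position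
(`r = r₀`, `θ = π/2`) the numerator and denominator of `R` coincide identically, giving (iv).
-/

open Real Filter Topology

section EvenComposition

variable {𝕜 F : Type*} [NontriviallyNormedField 𝕜] [NormedAddCommGroup F] [NormedSpace 𝕜 F]

theorem hasDerivAt_sub_smul_of_continuousAt {k : 𝕜 → F} {a : 𝕜} (hk : ContinuousAt k a) :
    HasDerivAt (fun x => (x - a) • k x) (k a) a := by
  rw [hasDerivAt_iff_tendsto_slope]
  refine (hk.tendsto.mono_left nhdsWithin_le_nhds).congr' ?_
  filter_upwards [self_mem_nhdsWithin] with x hx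
  rw [slope_def_module, sub_self, zero_smul, sub_zero, inv_smul_smul₀ (sub_ne_zero.2 hx)]

variable {φ : 𝕜 → F}

theorem hasDerivAt_comp_sq {x : 𝕜} (hφ : DifferentiableAt 𝕜 φ (x ^ 2)) :
    HasDerivAt (fun y => φ (y ^ 2)) (x • (2 : 𝕜) • deriv φ (x ^ 2)) x := by
  refine (hφ.hasDerivAt.scomp x (hasDerivAt_pow 2 x)).congr_deriv ?_
  rw [smul_smul]
  congr 1
  norm_num
  ring

theorem deriv_comp_sq_zero_s12 (hφ : DifferentiableAt 𝕜 φ 0) :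
    deriv (fun x => φ (x ^ 2)) 0 = 0 := by
  rw [← zero_pow two_ne_zero] at hφ
  simp [(hasDerivAt_comp_sq hφ).deriv]

theorem deriv_deriv_comp_sq_zero (hφ : ContDiffAt 𝕜 1 φ 0) :
    deriv (deriv fun x => φ (x ^ 2)) 0 = (2 : 𝕜) • deriv φ 0 := by
  have hsq : Tendsto (fun x : 𝕜 => x ^ 2) (𝓝 0) (𝓝 0) := by
    simpa using (continuous_pow 2).tendsto (0 : 𝕜)
  have hdiff : ∀ᶠ x in 𝓝 (0 : 𝕜), DifferentiableAt 𝕜 φ (x ^ 2) :=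
    hsq.eventually ((hφ.eventually (by simp)).mono fun _ h => h.differentiableAt_one)
  have hcont : ContinuousAt (fun x : 𝕜 => (2 : 𝕜) • deriv φ (x ^ 2)) 0 :=
    (((hφ.derivWithin (m := 0) (by simp)).continuousAt).comp_of_eq
      (continuous_pow 2).continuousAt (zero_pow two_ne_zero)).const_smul _
  have hderiv : deriv (fun x => φ (x ^ 2)) =ᶠ[𝓝 0] fun x => (x - 0) • (2 : 𝕜) • deriv φ (x ^ 2) :=
    hdiff.mono fun x hx => by simpa only [sub_zero] using (hasDerivAt_comp_sq hx).deriv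
  rw [hderiv.deriv_eq, (hasDerivAt_sub_smul_of_continuousAt hcont).deriv]
  simp

end EvenComposition

/- The Kerr functions `Δ`, `Σ`, `ρ²` with `u` in place of `λ²`; the parameter `s` of `kerrSigma`
stands for `sin²θ`, so `Σ₀` is `kerrSigma` at `ρ = r₀`, `s = 1`. -/
def kerrDelta (G M ρ a u : ℝ) : ℝ := ρ ^ 2 - 2 * G * M * u * ρ + u * a ^ 2

def kerrSigma (G M ρ a s u : ℝ) : ℝ :=
  (ρ ^ 2 + u * a ^ 2) ^ 2 - u * a ^ 2 * kerrDelta G M ρ a u * s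

noncomputable def kerrRhoSq (r a θ u : ℝ) : ℝ := r ^ 2 + u * a ^ 2 * cos θ ^ 2

noncomputable def zamoNum (G M r₀ r a θ u : ℝ) : ℝ :=
  (kerrRhoSq r a θ u - 2 * G * M * u * r) * kerrSigma G M r₀ a 1 u ^ 2
    - 4 * G ^ 2 * M ^ 2 * a ^ 2 * u ^ 3 * r₀ *
      (r₀ * kerrSigma G M r a (sin θ ^ 2) u - 2 * r * kerrSigma G M r₀ a 1 u) * sin θ ^ 2

noncomputable def zamoDen (G M r₀ r a θ u : ℝ) : ℝ :=
  r₀ ^ 2 * kerrRhoSq r a θ u * kerrDelta G M r₀ a u * kerrSigma G M r₀ a 1 u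

/-- `α(λ)² = zamoNormSq G M r₀ r a θ (λ²)`. -/
noncomputable def zamoNormSq (G M r₀ r a θ u : ℝ) : ℝ :=
  zamoNum G M r₀ r a θ u / zamoDen G M r₀ r a θ u

section ZamoNorm

variable (G M r₀ r a θ : ℝ)

theorem zamoNum_zero : zamoNum G M r₀ r a θ 0 = r₀ ^ 8 * r ^ 2 := by
  simp only [zamoNum, kerrRhoSq, kerrSigma, kerrDelta]
  ring

theorem zamoDen_zero : zamoDen G M r₀ r a θ 0 = r₀ ^ 8 * r ^ 2 := by
  simp only [zamoDen, kerrRhoSq, kerrSigma, kerrDelta]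
  ring

theorem contDiff_zamoNum {n : WithTop ℕ∞} : ContDiff ℝ n (zamoNum G M r₀ r a θ) := by
  unfold zamoNum kerrRhoSq kerrSigma kerrDelta
  fun_prop

theorem contDiff_zamoDen {n : WithTop ℕ∞} : ContDiff ℝ n (zamoDen G M r₀ r a θ) := by
  unfold zamoDen kerrRhoSq kerrSigma kerrDelta
  fun_prop

theorem deriv_zamoNum_zero :
    deriv (zamoNum G M r₀ r a θ) 0
      = r₀ ^ 8 * a ^ 2 * cos θ ^ 2 + 2 * r₀ ^ 6 * r ^ 2 * a ^ 2 - 2 * G * M * r₀ ^ 8 * r := by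
  unfold zamoNum kerrRhoSq kerrSigma kerrDelta
  simp (disch := fun_prop) only [deriv_fun_sub, deriv_fun_mul, deriv_fun_add, deriv_fun_pow, deriv_const', deriv_id'',
    deriv_const_mul_id']
  ring

theorem deriv_zamoDen_zero :
    deriv (zamoDen G M r₀ r a θ) 0
      = r₀ ^ 8 * a ^ 2 * cos θ ^ 2 + 2 * r₀ ^ 6 * r ^ 2 * a ^ 2 - 2 * G * M * r₀ ^ 7 * r ^ 2 := by
  unfold zamoDen kerrRhoSq kerrSigma kerrDelta
  simp (disch := fun_prop) only [deriv_fun_sub, deriv_fun_mul, deriv_fun_add, deriv_fun_pow, deriv_const', deriv_id'',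
    deriv_const_mul_id']
  ring

variable {r₀ r}

theorem zamoDen_zero_ne_zero (hr₀ : r₀ ≠ 0) (hr : r ≠ 0) : zamoDen G M r₀ r a θ 0 ≠ 0 := by
  rw [zamoDen_zero]
  positivity

theorem zamoNormSq_zero (hr₀ : r₀ ≠ 0) (hr : r ≠ 0) : zamoNormSq G M r₀ r a θ 0 = 1 :=
  div_eq_one_iff_eq (zamoDen_zero_ne_zero G M a θ hr₀ hr) |>.2 <| by
    rw [zamoNum_zero, zamoDen_zero]

theorem contDiffAt_zamoNormSq {n : WithTop ℕ∞} (hr₀ : r₀ ≠ 0) (hr : r ≠ 0) :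
    ContDiffAt ℝ n (zamoNormSq G M r₀ r a θ) 0 :=
  (contDiff_zamoNum G M r₀ r a θ).contDiffAt.div (contDiff_zamoDen G M r₀ r a θ).contDiffAt
    (zamoDen_zero_ne_zero G M a θ hr₀ hr)

theorem hasDerivAt_zamoNormSq_zero (hr₀ : r₀ ≠ 0) (hr : r ≠ 0) :
    HasDerivAt (zamoNormSq G M r₀ r a θ) (2 * G * M / r₀ - 2 * G * M / r) 0 := by
  have hN := ((contDiff_zamoNum G M r₀ r a θ (n := 1)).differentiable one_ne_zero 0).hasDerivAt
  have hD := ((contDiff_zamoDen G M r₀ r a θ (n := 1)).differentiable one_ne_zero 0).hasDerivAt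
  refine (hN.div hD (zamoDen_zero_ne_zero G M a θ hr₀ hr)).congr_deriv ?_
  rw [zamoNum_zero, zamoDen_zero, deriv_zamoNum_zero, deriv_zamoDen_zero]
  field_simp
  ring

theorem zamoNormSq_equatorial {u : ℝ} (hden : zamoDen G M r r a (π / 2) u ≠ 0) :
    zamoNormSq G M r r a (π / 2) u = 1 := by
  refine (div_eq_one_iff_eq hden).2 ?_
  simp only [zamoNum, zamoDen, kerrRhoSq, kerrSigma, kerrDelta, cos_pi_div_two, sin_pi_div_two]
  ring

end ZamoNorm

theorem kerr_zamo_killing_norm_general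
    (G M r₀ r : ℝ) (hr₀ : 0 < r₀) (hr : 0 < r)
    (a θ : ℝ)
    (ρsq Δ Sig Δ₀ Sig₀ α : ℝ → ℝ)
    (hρ : ∀ l, ρsq l = r ^ 2 + l ^ 2 * a ^ 2 * Real.cos θ ^ 2)
    (hΔ : ∀ l, Δ l = r ^ 2 - 2 * G * M * l ^ 2 * r + l ^ 2 * a ^ 2)
    (hSig : ∀ l, Sig l = (r ^ 2 + l ^ 2 * a ^ 2) ^ 2 - l ^ 2 * a ^ 2 * Δ l * Real.sin θ ^ 2)
    (hΔ₀ : ∀ l, Δ₀ l = r₀ ^ 2 - 2 * G * M * l ^ 2 * r₀ + l ^ 2 * a ^ 2)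
    (hSig₀ : ∀ l, Sig₀ l = (r₀ ^ 2 + l ^ 2 * a ^ 2) ^ 2 - l ^ 2 * a ^ 2 * Δ₀ l)
    (hα : ∀ l, α l = Real.sqrt
        (((ρsq l - 2 * G * M * l ^ 2 * r) * Sig₀ l ^ 2
            - 4 * G ^ 2 * M ^ 2 * a ^ 2 * l ^ 6 * r₀ *
              (r₀ * Sig l - 2 * r * Sig₀ l) * Real.sin θ ^ 2) /
          (r₀ ^ 2 * ρsq l * Δ₀ l * Sig₀ l))) :
    α 0 = 1 ∧
    deriv α 0 = 0 ∧
    deriv (deriv α) 0 = 2 * G * M / r₀ - 2 * G * M / r ∧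
    (r = r₀ → θ = π / 2 → ∀ l, 0 < Δ₀ l → 0 < Sig₀ l → α l = 1) := by
  have hR0 : zamoNormSq G M r₀ r a θ 0 = 1 := zamoNormSq_zero G M a θ hr₀.ne' hr.ne'
  have hαR : α = fun l => √(zamoNormSq G M r₀ r a θ (l ^ 2)) := funext fun l => by
    rw [hα, hSig, hSig₀, hΔ, hΔ₀, hρ]
    simp only [zamoNormSq, zamoNum, zamoDen, kerrRhoSq, kerrSigma, kerrDelta]
    congr 2 <;> ring
  have hsqrt : ContDiffAt ℝ 1 (fun u => √(zamoNormSq G M r₀ r a θ u)) 0 :=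
    (contDiffAt_zamoNormSq G M a θ hr₀.ne' hr.ne').sqrt (by simp [hR0])
  have hsqrt' : HasDerivAt (fun u => √(zamoNormSq G M r₀ r a θ u))
      ((2 * G * M / r₀ - 2 * G * M / r) / 2) 0 :=
    ((hasDerivAt_zamoNormSq_zero G M a θ hr₀.ne' hr.ne').sqrt (by simp [hR0])).congr_deriv
      (by rw [hR0, sqrt_one, mul_one])
  refine ⟨by simp [hαR, hR0], ?_, ?_, ?_⟩
  · rw [hαR]
    exact deriv_comp_sq_zero_s12 hsqrt.differentiableAt_one
  · rw [hαR, deriv_deriv_comp_sq_zero hsqrt, hsqrt'.deriv, smul_eq_mul]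
    ring
  · rintro rfl rfl l hΔl hSigl
    rw [congrFun hαR l, zamoNormSq_equatorial, sqrt_one]
    have hden : zamoDen G M r r a (π / 2) (l ^ 2) = r ^ 2 * ρsq l * Δ₀ l * Sig₀ l := by
      rw [hρ, hSig₀, hΔ₀]
      simp only [zamoDen, kerrRhoSq, kerrSigma, kerrDelta]
      ring
    rw [hden, hρ, cos_pi_div_two]
    positivity

/-- For the timelike Killing field of a zero angular momentum
observer (ZAMO) at Boyer–Lindquist radius `r₀` in the equatorial plane of Kerr
spacetime, the normalized norm `α(λ) = λ‖K‖` evaluated at Boyer–Lindquist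
coordinates `(r, θ)` satisfies `α(0) = 1`, `α'(0) = 0`,
`α''(0) = 2GM/r₀ − 2GM/r`, and `α ≡ 1` at the ZAMO position. -/
theorem kerr_zamo_killing_norm
    (G M r₀ r : ℝ) (hG : 0 < G) (hM : 0 < M) (hr₀ : 0 < r₀) (hr : 0 < r)
    (a θ : ℝ)
    (ρsq Δ Sig Δ₀ Sig₀ α : ℝ → ℝ)
    (hρ : ∀ l, ρsq l = r ^ 2 + l ^ 2 * a ^ 2 * Real.cos θ ^ 2)
    (hΔ : ∀ l, Δ l = r ^ 2 - 2 * G * M * l ^ 2 * r + l ^ 2 * a ^ 2)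
    (hSig : ∀ l, Sig l = (r ^ 2 + l ^ 2 * a ^ 2) ^ 2 - l ^ 2 * a ^ 2 * Δ l * Real.sin θ ^ 2)
    (hΔ₀ : ∀ l, Δ₀ l = r₀ ^ 2 - 2 * G * M * l ^ 2 * r₀ + l ^ 2 * a ^ 2)
    (hSig₀ : ∀ l, Sig₀ l = (r₀ ^ 2 + l ^ 2 * a ^ 2) ^ 2 - l ^ 2 * a ^ 2 * Δ₀ l)
    (hα : ∀ l, α l = Real.sqrt
        (((ρsq l - 2 * G * M * l ^ 2 * r) * Sig₀ l ^ 2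
            - 4 * G ^ 2 * M ^ 2 * a ^ 2 * l ^ 6 * r₀ *
              (r₀ * Sig l - 2 * r * Sig₀ l) * Real.sin θ ^ 2) /
          (r₀ ^ 2 * ρsq l * Δ₀ l * Sig₀ l))) :
    α 0 = 1 ∧
    deriv α 0 = 0 ∧
    deriv (deriv α) 0 = 2 * G * M / r₀ - 2 * G * M / r ∧
    (r = r₀ → θ = π / 2 → ∀ l, 0 < Δ₀ l → 0 < Sig₀ l → α l = 1) :=
  kerr_zamo_killing_norm_general G M r₀ r hr₀ hr a θ ρsq Δ Sig Δ₀ Sig₀ α hρ hΔ hSig hΔ₀ hSig₀ hα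
end
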